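/- For a J-symmetric matrix M and nonzero s ∈ R^{n+m}, with P = I - s s^T/(s^T s), it holds that ||J P J M P||_F^2 = (1 - ||J P J M s||^2/(||s||^2 ||J P J M||_F^2)) · (1 - ||M^T J s||^2/(||s||^2 ||M||_F^2)) · ||M||_F^2 (assuming the denominators are nonzero). -/
import Mathlib


open Matrix

/-- `J = diag(I_n, -I_m)` as a block matrix. -/
noncomputable def Jmat (n m : ℕ) : Matrix (Fin n ⊕ Fin m) (Fin n ⊕ Fin m) ℝ :=
  Matrix.fromBlocks 1 0 0 (-1)

/-- Frobenius norm of a real matrix. -/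
noncomputable def frobNorm {ι κ : Type*} [Fintype ι] [Fintype κ] (M : Matrix ι κ ℝ) : ℝ :=
  Real.sqrt (∑ i, ∑ j, (M i j) ^ 2)

/-- Euclidean norm of a real vector. -/
noncomputable def vNorm {ι : Type*} [Fintype ι] (v : ι → ℝ) : ℝ :=
  Real.sqrt (v ⬝ᵥ v)


lemma frob_sq' {ι κ : Type*} [Fintype ι] [Fintype κ] (M : Matrix ι κ ℝ) :
    Real.sqrt (∑ i, ∑ j, (M i j) ^ 2) ^ 2 = ∑ i, ∑ j, (M i j) ^ 2 :=
  Real.sq_sqrt (by positivity)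

lemma vNorm_sq' {ι : Type*} [Fintype ι] (v : ι → ℝ) :
    Real.sqrt (v ⬝ᵥ v) ^ 2 = v ⬝ᵥ v :=
  Real.sq_sqrt (Finset.sum_nonneg fun i _ => mul_self_nonneg _)

lemma keyA {ι : Type*} [Fintype ι] [DecidableEq ι] (A : Matrix ι ι ℝ) (s : ι → ℝ)
    (hσ : s ⬝ᵥ s ≠ 0) :
    ∑ i, ∑ j, ((A * (1 - (s ⬝ᵥ s)⁻¹ • vecMulVec s s)) i j) ^ 2
      = (∑ i, ∑ j, (A i j) ^ 2) - (A *ᵥ s ⬝ᵥ A *ᵥ s) / (s ⬝ᵥ s) := by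
  have happ : ∀ i j, (A * (1 - (s ⬝ᵥ s)⁻¹ • vecMulVec s s)) i j
      = A i j - (s ⬝ᵥ s)⁻¹ * ((A *ᵥ s) i * s j) := by
    intro i j
    rw [Matrix.mul_sub, Matrix.mul_one, Matrix.sub_apply, Matrix.mul_smul, Matrix.smul_apply,
      smul_eq_mul]
    congr 1
    congr 1
    simp [Matrix.mul_apply, vecMulVec_apply, Matrix.mulVec, dotProduct, Finset.sum_mul, mul_assoc]
  have inner : ∀ i, ∑ j, (A i j - (s ⬝ᵥ s)⁻¹ * ((A *ᵥ s) i * s j)) ^ 2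
      = (∑ j, (A i j) ^ 2)
        - 2 * (s ⬝ᵥ s)⁻¹ * ((A *ᵥ s) i * (A *ᵥ s) i)
        + (s ⬝ᵥ s)⁻¹ ^ 2 * ((A *ᵥ s) i * (A *ᵥ s) i) * (s ⬝ᵥ s) := by
    intro i
    have h1 : ∀ j ∈ Finset.univ, (A i j - (s ⬝ᵥ s)⁻¹ * ((A *ᵥ s) i * s j)) ^ 2
        = (A i j) ^ 2 - (2 * (s ⬝ᵥ s)⁻¹ * (A *ᵥ s) i) * (A i j * s j)
          + ((s ⬝ᵥ s)⁻¹ ^ 2 * ((A *ᵥ s) i * (A *ᵥ s) i)) * (s j * s j) := by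
      intro j _; ring
    rw [Finset.sum_congr rfl h1, Finset.sum_add_distrib, Finset.sum_sub_distrib,
      ← Finset.mul_sum, ← Finset.mul_sum]
    have h2 : ∑ j, A i j * s j = (A *ᵥ s) i := rfl
    have h3 : ∑ j, s j * s j = s ⬝ᵥ s := rfl
    rw [h2, h3]
    ring
  calc ∑ i, ∑ j, ((A * (1 - (s ⬝ᵥ s)⁻¹ • vecMulVec s s)) i j) ^ 2
      = ∑ i, ((∑ j, (A i j) ^ 2)
        - 2 * (s ⬝ᵥ s)⁻¹ * ((A *ᵥ s) i * (A *ᵥ s) i)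
        + (s ⬝ᵥ s)⁻¹ ^ 2 * ((A *ᵥ s) i * (A *ᵥ s) i) * (s ⬝ᵥ s)) := by
        refine Finset.sum_congr rfl fun i _ => ?_
        rw [Finset.sum_congr rfl fun j _ => by rw [happ i j]]
        exact inner i
    _ = (∑ i, ∑ j, (A i j) ^ 2)
        - 2 * (s ⬝ᵥ s)⁻¹ * (A *ᵥ s ⬝ᵥ A *ᵥ s)
        + (s ⬝ᵥ s)⁻¹ ^ 2 * (A *ᵥ s ⬝ᵥ A *ᵥ s) * (s ⬝ᵥ s) := by
        have hd : A *ᵥ s ⬝ᵥ A *ᵥ s = ∑ i, (A *ᵥ s) i * (A *ᵥ s) i := rfl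
        rw [hd, Finset.sum_add_distrib, Finset.sum_sub_distrib, ← Finset.mul_sum,
          ← Finset.sum_mul, ← Finset.mul_sum]
    _ = (∑ i, ∑ j, (A i j) ^ 2) - (A *ᵥ s ⬝ᵥ A *ᵥ s) / (s ⬝ᵥ s) := by
        field_simp
        ring


lemma JTlem (n m : ℕ) : (Jmat n m)ᵀ = Jmat n m := by
  simp [Jmat, Matrix.fromBlocks_transpose]

lemma JJlem (n m : ℕ) : Jmat n m * Jmat n m = 1 := by
  simp [Jmat, Matrix.fromBlocks_multiply, ← Matrix.fromBlocks_one]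

lemma trans_sq {ι κ : Type*} [Fintype ι] [Fintype κ] (X : Matrix ι κ ℝ) :
    ∑ i, ∑ j, (X i j) ^ 2 = ∑ j, ∑ i, (Xᵀ j i) ^ 2 := by
  rw [Finset.sum_comm]
  rfl

lemma JVJ (n m : ℕ) (s : (Fin n ⊕ Fin m) → ℝ) :
    Jmat n m * vecMulVec s s * Jmat n m
      = vecMulVec ((Jmat n m) *ᵥ s) ((Jmat n m) *ᵥ s) := by
  have h1 : Jmat n m * vecMulVec s s = vecMulVec ((Jmat n m) *ᵥ s) s := by
    ext i j
    simp only [Matrix.mul_apply, vecMulVec_apply, Matrix.mulVec, dotProduct,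
      Finset.sum_mul, mul_assoc]
  rw [h1]
  ext i j
  have : ∑ k, s k * Jmat n m k j = (Jmat n m *ᵥ s) j := by
    rw [show (Jmat n m *ᵥ s) j = ∑ k, Jmat n m j k * s k from rfl]
    refine Finset.sum_congr rfl fun k _ => ?_
    rw [mul_comm]
    congr 1
    have := congrFun (congrFun (JTlem n m) k) j
    simpa [Matrix.transpose_apply] using this.symm
  simp [Matrix.mul_apply, vecMulVec_apply, mul_assoc, ← Finset.mul_sum, this]

lemma Jdot (n m : ℕ) (s : (Fin n ⊕ Fin m) → ℝ) :
    (Jmat n m *ᵥ s) ⬝ᵥ (Jmat n m *ᵥ s) = s ⬝ᵥ s := by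
  rw [Matrix.dotProduct_mulVec]
  nth_rewrite 2 [← JTlem n m]
  rw [Matrix.vecMul_transpose, Matrix.mulVec_mulVec, JJlem, Matrix.one_mulVec]

theorem stmt_7 (n m : ℕ) (M : Matrix (Fin n ⊕ Fin m) (Fin n ⊕ Fin m) ℝ)
    (s : (Fin n ⊕ Fin m) → ℝ) (hs : s ≠ 0)
    (hM : Jmat n m * M = Mᵀ * Jmat n m)
    (hM0 : frobNorm M ≠ 0)
    (hJPJM : frobNorm (Jmat n m * (1 - (s ⬝ᵥ s)⁻¹ • Matrix.vecMulVec s s)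
        * Jmat n m * M) ≠ 0) :
    let J := Jmat n m
    let P : Matrix (Fin n ⊕ Fin m) (Fin n ⊕ Fin m) ℝ :=
      1 - (s ⬝ᵥ s)⁻¹ • Matrix.vecMulVec s s
    frobNorm (J * P * J * M * P) ^ 2
      = (1 - vNorm ((J * P * J * M).mulVec s) ^ 2
            / (vNorm s ^ 2 * frobNorm (J * P * J * M) ^ 2))
        * (1 - vNorm (Mᵀ.mulVec (J.mulVec s)) ^ 2
            / (vNorm s ^ 2 * frobNorm M ^ 2))
        * frobNorm M ^ 2 := by
  intro J P
  have hσ : s ⬝ᵥ s ≠ 0 := fun h => hs (dotProduct_self_eq_zero.mp h)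
  have hJ : J = Jmat n m := rfl
  have hP : P = 1 - (s ⬝ᵥ s)⁻¹ • vecMulVec s s := rfl
  have htt : (Jmat n m *ᵥ s) ⬝ᵥ (Jmat n m *ᵥ s) = s ⬝ᵥ s := Jdot n m s
  have hQ : Jmat n m * (1 - (s ⬝ᵥ s)⁻¹ • vecMulVec s s) * Jmat n m
      = 1 - (s ⬝ᵥ s)⁻¹ • vecMulVec (Jmat n m *ᵥ s) (Jmat n m *ᵥ s) := by
    rw [Matrix.mul_sub, Matrix.mul_one, Matrix.sub_mul, JJlem, Matrix.mul_smul,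
      Matrix.smul_mul, JVJ]
  have hQT : (1 - (s ⬝ᵥ s)⁻¹ • vecMulVec (Jmat n m *ᵥ s) (Jmat n m *ᵥ s))ᵀ
      = 1 - (s ⬝ᵥ s)⁻¹ • vecMulVec (Jmat n m *ᵥ s) (Jmat n m *ᵥ s) := by
    rw [Matrix.transpose_sub, Matrix.transpose_one, Matrix.transpose_smul]
    congr 1
    congr 1
    ext i j
    simp [vecMulVec_apply, mul_comm]
  have hFN : (∑ i, ∑ j, ((Jmat n m * (1 - (s ⬝ᵥ s)⁻¹ • vecMulVec s s) * Jmat n m * M) i j) ^ 2)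
      = (∑ i, ∑ j, (M i j) ^ 2)
        - ((Mᵀ *ᵥ (Jmat n m *ᵥ s)) ⬝ᵥ (Mᵀ *ᵥ (Jmat n m *ᵥ s))) / (s ⬝ᵥ s) := by
    rw [hQ, trans_sq, Matrix.transpose_mul, hQT]
    rw [show (s ⬝ᵥ s) = ((Jmat n m *ᵥ s) ⬝ᵥ (Jmat n m *ᵥ s)) from htt.symm]
    rw [keyA Mᵀ (Jmat n m *ᵥ s) (by rwa [htt])]
    rw [← trans_sq]
  have hFMne : (∑ i, ∑ j, (M i j) ^ 2) ≠ 0 := by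
    have h := pow_ne_zero 2 hM0
    rwa [frobNorm, frob_sq'] at h
  have hFNne : (∑ i, ∑ j, (M i j) ^ 2)
      - ((Mᵀ *ᵥ (Jmat n m *ᵥ s)) ⬝ᵥ (Mᵀ *ᵥ (Jmat n m *ᵥ s))) / (s ⬝ᵥ s) ≠ 0 := by
    have h := pow_ne_zero 2 hJPJM
    rwa [frobNorm, frob_sq', hFN] at h
  simp only [hJ, hP, frobNorm, vNorm]
  rw [frob_sq', frob_sq', frob_sq', vNorm_sq', vNorm_sq', vNorm_sq']
  rw [keyA (Jmat n m * (1 - (s ⬝ᵥ s)⁻¹ • vecMulVec s s) * Jmat n m * M) s hσ]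
  rw [hFN]
  set u := (Jmat n m * (1 - (s ⬝ᵥ s)⁻¹ • vecMulVec s s) * Jmat n m * M) *ᵥ s ⬝ᵥ
    (Jmat n m * (1 - (s ⬝ᵥ s)⁻¹ • vecMulVec s s) * Jmat n m * M) *ᵥ s with hu
  set w := Mᵀ *ᵥ (Jmat n m *ᵥ s) ⬝ᵥ Mᵀ *ᵥ (Jmat n m *ᵥ s) with hw
  set a := ∑ i, ∑ j, (M i j) ^ 2 with ha
  set σv := s ⬝ᵥ s with hσv
  have h2 : a - w / σv ≠ 0 := hFNne
  have h3 : a * σv - w ≠ 0 := by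
    have h4 := mul_ne_zero hσ h2
    have h5 : σv * (a - w / σv) = a * σv - w := by
      field_simp
    rw [h5] at h4
    exact h4
  field_simp [h3]
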